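/- Let G be a bipartite connected simple graph on n > 2 vertices and let γ^(k) = sqrt( (Σ_i d_{k+1}(i)²) / (Σ_i d_k(i)²) ) where d_k(i) is the number of walks of length k starting at vertex i. Then for every k ≥ 0, EE(G) ≥ 2·cosh(γ^(k)) + n − 2, with equality if and only if G is isomorphic to a complete bipartite graph K_{p,q} with p + q = n. -/

import Mathlib

/-- The adjacency matrix of a simple graph over `ℝ` is Hermitian. -/
theorem adjHerm {n : ℕ} (G : SimpleGraph (Fin n)) [DecidableRel G.Adj] :
    (G.adjMatrix ℝ).IsHermitian := by
  rw [Matrix.IsHermitian, Matrix.conjTranspose_eq_transpose_of_trivial]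
  exact G.isSymm_adjMatrix

/-- The (real) eigenvalues of the adjacency matrix of `G`. -/
noncomputable def graphEigs {n : ℕ} (G : SimpleGraph (Fin n)) [DecidableRel G.Adj] :
    Fin n → ℝ := (adjHerm G).eigenvalues

/-- The Estrada index `EE(G) = ∑ i, exp (λ i)`. -/
noncomputable def estradaIndex {n : ℕ} (G : SimpleGraph (Fin n)) [DecidableRel G.Adj] : ℝ :=
  ∑ i, Real.exp (graphEigs G i)

/-- `dwalk G k i` is the number of walks of length `k` starting at `i`,
computed as `(A^k 𝟙)_i`. -/
noncomputable def dwalk {n : ℕ} (G : SimpleGraph (Fin n)) [DecidableRel G.Adj]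
    (k : ℕ) (i : Fin n) : ℝ :=
  ((G.adjMatrix ℝ) ^ k).mulVec (fun _ => 1) i

/-- The sequence `γ^(k) = sqrt((∑ i, d_{k+1}(i)²)/(∑ i, d_k(i)²))`. -/
noncomputable def gammaSeq {n : ℕ} (G : SimpleGraph (Fin n)) [DecidableRel G.Adj]
    (k : ℕ) : ℝ :=
  Real.sqrt ((∑ i, dwalk G (k + 1) i ^ 2) / (∑ i, dwalk G k i ^ 2))

/-!
Let `r` be the largest adjacency eigenvalue. Conjugating `A` by the `±1` signature of a
2-colouring gives `-A`, so the spectrum is symmetric: `-r` is an eigenvalue and `|λᵢ| ≤ r` for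
all `i`. Hence `∑ d_{k+1}² = ‖A (Aᵏ 𝟙)‖² ≤ r² ∑ d_k²`, i.e. `γ^(k) ≤ r`. As `tr A = 0`, applying
`eˣ ≥ 1 + x` to the `n - 2` remaining eigenvalues gives
`EE ≥ 2 cosh r + n - 2 ≥ 2 cosh γ^(k) + n - 2`.

Equality forces the remaining eigenvalues to vanish, so `A³ = r² A`; then every walk of length 3
closes up to an edge, so any two vertices of different colours (joined by an odd walk) are
adjacent and `G` is complete bipartite. Conversely, for `K_{p,q}` the adjacency matrix is
`a bᵀ + b aᵀ` with `a`, `b` the indicators of the two sides, whence `A³ = pq A`, `A² 𝟙 = pq 𝟙` and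
`tr A² = 2pq`; these give `γ^(k) = r = √(pq)` and force the remaining eigenvalues to vanish.
-/

open Matrix

lemma Matrix.IsSymm.mulVec_dotProduct {ι R : Type*} [Fintype ι] [CommSemiring R]
    {A : Matrix ι ι R} (hA : A.IsSymm) (x y : ι → R) :
    (A *ᵥ x) ⬝ᵥ y = x ⬝ᵥ (A *ᵥ y) := by
  rw [dotProduct_mulVec, ← vecMul_transpose, hA.eq]

namespace Matrix.IsHermitian

variable {ι 𝕜 : Type*} [Fintype ι] [DecidableEq ι] [RCLike 𝕜] {A : Matrix ι ι 𝕜}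

lemma trace_pow_eq_sum_eigenvalues_pow (hA : A.IsHermitian) (k : ℕ) :
    (A ^ k).trace = ∑ i, ((hA.eigenvalues i ^ k : ℝ) : 𝕜) := by
  rw [← cfc_pow_id (R := ℝ) A k hA.isSelfAdjoint, hA.cfc_eq, IsHermitian.cfc,
    Unitary.conjStarAlgAut_apply, trace_mul_cycle, Unitary.coe_star_mul_self, one_mul,
    trace_diagonal]
  rfl

lemma pow_three_eq_smul_iff (hA : A.IsHermitian) (s : ℝ) :
    A ^ 3 = s • A ↔ ∀ i, hA.eigenvalues i ^ 3 = s * hA.eigenvalues i := by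
  rw [← cfc_pow_id (R := ℝ) A 3 hA.isSelfAdjoint,
    ← cfc_const_mul_id (R := ℝ) s A hA.isSelfAdjoint]
  refine ⟨fun h i => ?_, fun h => ?_⟩
  · have hf := eqOn_of_cfc_eq_cfc (ha := hA.isSelfAdjoint) h
    exact hf (hA.eigenvalues_mem_spectrum_real i)
  · refine cfc_congr ?_
    rw [hA.spectrum_real_eq_range_eigenvalues]
    rintro - ⟨i, rfl⟩
    exact h i

open scoped MatrixOrder in
lemma mulVec_dotProduct_mulVec_le {A : Matrix ι ι ℝ} (hA : A.IsHermitian) {ρ : ℝ}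
    (hρ : ∀ i, |hA.eigenvalues i| ≤ ρ) (x : ι → ℝ) :
    (A *ᵥ x) ⬝ᵥ (A *ᵥ x) ≤ ρ ^ 2 * (x ⬝ᵥ x) := by
  have hle : A ^ 2 ≤ algebraMap ℝ _ (ρ ^ 2) := by
    rw [← cfc_pow_id (R := ℝ) A 2 hA.isSelfAdjoint]
    refine cfc_le_algebraMap _ _ A fun μ hμ => ?_
    rw [hA.spectrum_real_eq_range_eigenvalues] at hμ
    obtain ⟨i, rfl⟩ := hμ
    exact sq_le_sq' (abs_le.mp (hρ i)).1 (abs_le.mp (hρ i)).2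
  have hsymm : A.IsSymm := by
    rw [IsSymm, ← conjTranspose_eq_transpose_of_trivial]
    exact hA
  have := (le_iff.mp hle).dotProduct_mulVec_nonneg x
  rw [star_trivial, sub_mulVec, dotProduct_sub, sub_nonneg, Algebra.algebraMap_eq_smul_one,
    smul_mulVec, one_mulVec, dotProduct_smul, smul_eq_mul, sq A, ← mulVec_mulVec,
    ← hsymm.mulVec_dotProduct] at this
  exact this

end Matrix.IsHermitian

namespace Matrix

variable {ι R : Type*} [Fintype ι] [DecidableEq ι] [CommRing R] {a b : ι → R}

lemma vecMulVec_add_vecMulVec_sq (hab : a ⬝ᵥ b = 0) :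
    (vecMulVec a b + vecMulVec b a) ^ 2 =
      (b ⬝ᵥ b) • vecMulVec a a + (a ⬝ᵥ a) • vecMulVec b b := by
  rw [pow_two, add_mul, mul_add, mul_add, vecMulVec_mul_vecMulVec, vecMulVec_mul_vecMulVec,
    vecMulVec_mul_vecMulVec, vecMulVec_mul_vecMulVec, hab, dotProduct_comm b a, hab]
  simp only [zero_smul, vecMulVec_zero, vecMulVec_smul, zero_add, add_zero]

lemma vecMulVec_add_vecMulVec_pow_three (hab : a ⬝ᵥ b = 0) :
    (vecMulVec a b + vecMulVec b a) ^ 3 =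
      ((a ⬝ᵥ a) * (b ⬝ᵥ b)) • (vecMulVec a b + vecMulVec b a) := by
  rw [pow_succ, vecMulVec_add_vecMulVec_sq hab]
  simp only [add_mul, mul_add, smul_mul_assoc, vecMulVec_mul_vecMulVec, hab, dotProduct_comm b a,
    zero_smul, vecMulVec_zero, smul_zero, add_zero, zero_add, vecMulVec_smul, smul_add, smul_smul]
  rw [mul_comm (a ⬝ᵥ a), add_comm]

lemma vecMulVec_add_vecMulVec_sq_mulVec (hab : a ⬝ᵥ b = 0) :
    (vecMulVec a b + vecMulVec b a) ^ 2 *ᵥ (a + b) = ((a ⬝ᵥ a) * (b ⬝ᵥ b)) • (a + b) := by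
  rw [vecMulVec_add_vecMulVec_sq hab]
  simp only [add_mulVec, smul_mulVec, vecMulVec_mulVec, dotProduct_add, hab, dotProduct_comm b a]
  simp [smul_smul, mul_comm, smul_add, add_comm]

lemma trace_vecMulVec_add_vecMulVec_sq (hab : a ⬝ᵥ b = 0) :
    ((vecMulVec a b + vecMulVec b a) ^ 2).trace = 2 * ((a ⬝ᵥ a) * (b ⬝ᵥ b)) := by
  rw [vecMulVec_add_vecMulVec_sq hab]
  simp [trace, vecMulVec_apply, Finset.sum_add_distrib, ← Finset.mul_sum, dotProduct]
  ring

end Matrix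

namespace SimpleGraph

variable {V : Type*} {G : SimpleGraph V}

lemma Walk.adj_of_odd_length
    (h3 : ∀ ⦃a b c d : V⦄, G.Adj a b → G.Adj b c → G.Adj c d → G.Adj a d)
    {u v : V} (p : G.Walk u v) (hp : Odd p.length) : G.Adj u v := by
  suffices key : ∀ {u v : V} (p : G.Walk u v), (Odd p.length → G.Adj u v) ∧
      (Even p.length → u = v ∨ ∃ w, G.Adj u w ∧ G.Adj w v) from (key p).1 hp
  intro u v p
  induction p with
  | nil => simp
  | cons hub q ih =>
    rw [Walk.length_cons, Nat.odd_add_one, Nat.even_add_one, Nat.not_odd_iff_even,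
      Nat.not_even_iff_odd]
    refine ⟨fun hq => ?_, fun hq => .inr ⟨_, hub, ih.1 hq⟩⟩
    obtain rfl | ⟨w, hbw, hwv⟩ := ih.2 hq
    · exact hub
    · exact h3 hub hbw hwv

lemma Iso.adj_iff_isLeft_ne {α β : Type*} (e : G ≃g completeBipartiteGraph α β) (u v : V) :
    G.Adj u v ↔ (e u).isLeft ≠ (e v).isLeft := by
  rw [← e.map_adj_iff]
  cases e u <;> cases e v <;> simp

lemma exists_iso_completeBipartiteGraph_of_adj_iff [Fintype V] {c : V → Bool}
    (h : ∀ u v, G.Adj u v ↔ c u ≠ c v) :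
    ∃ p q : ℕ, p + q = Fintype.card V ∧
      Nonempty (G ≃g completeBipartiteGraph (Fin p) (Fin q)) := by
  let e : G ≃g completeBipartiteGraph {v // c v} {v // ¬c v} :=
    ⟨(Equiv.sumCompl fun v => c v).symm, fun {u v} => by
      rw [h]
      cases hu : c u <;> cases hv : c v <;> simp [Equiv.sumCompl, hu, hv]⟩
  refine ⟨_, _, ?_, ⟨e.trans (completeBipartiteGraphCongr (Fintype.equivFin _)
    (Fintype.equivFin _))⟩⟩
  rw [← Fintype.card_sum]
  exact Fintype.card_congr (Equiv.sumCompl _)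

variable [Fintype V] [DecidableRel G.Adj]

lemma exists_adjMatrix_eq_vecMulVec_add_vecMulVec {R : Type*} [NonAssocSemiring R]
    {c : V → Bool} (h : ∀ u v, G.Adj u v ↔ c u ≠ c v) :
    ∃ a b : V → R, a ⬝ᵥ b = 0 ∧ a + b = 1 ∧ G.adjMatrix R = vecMulVec a b + vecMulVec b a := by
  refine ⟨fun v => if c v then 1 else 0, fun v => if c v then 0 else 1, ?_, ?_, ?_⟩
  · exact Finset.sum_eq_zero fun v _ => by cases hv : c v <;> simp [hv]
  · ext v
    cases hv : c v <;> simp [hv]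
  · ext u v
    simp only [adjMatrix_apply, h, Matrix.add_apply, vecMulVec_apply]
    cases c u <;> cases c v <;> simp

variable [DecidableEq V]

lemma neg_mem_spectrum_adjMatrix {R : Type*} [CommRing R] (c : G.Coloring Bool) {μ : R}
    (hμ : μ ∈ spectrum R (G.adjMatrix R)) : -μ ∈ spectrum R (G.adjMatrix R) := by
  let S : Matrix V V R := diagonal fun v => if c v then 1 else -1
  have hS : S * S = 1 := by
    rw [diagonal_mul_diagonal, ← diagonal_one]
    congr 1
    ext v
    split_ifs <;> simp
  let u : (Matrix V V R)ˣ := ⟨S, S, hS, hS⟩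
  have hconj : u * G.adjMatrix R * u⁻¹ = -G.adjMatrix R := by
    ext v w
    simp only [u, S, Units.inv_mk, diagonal_mul, mul_diagonal, adjMatrix_apply]
    by_cases h : G.Adj v w
    · have hc := c.valid h
      cases hv : c v <;> cases hw : c w <;> simp_all
    · simp [h]
  have hspec : spectrum R (-G.adjMatrix R) = spectrum R (G.adjMatrix R) := by
    rw [← hconj, spectrum.units_conjugate]
  rwa [← hspec, ← spectrum.neg_eq, Set.neg_mem_neg]

lemma adj_of_adjMatrix_pow_three_eq_smul {R : Type*} [Semiring R] [CharZero R] {s : R}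
    (h : G.adjMatrix R ^ 3 = s • G.adjMatrix R) {a b c d : V}
    (hab : G.Adj a b) (hbc : G.Adj b c) (hcd : G.Adj c d) : G.Adj a d := by
  by_contra had
  have hwalks := congrFun (congrFun h a) d
  rw [adjMatrix_pow_apply_eq_card_walk, Matrix.smul_apply, adjMatrix_apply, if_neg had,
    smul_zero, Nat.cast_eq_zero, Fintype.card_eq_zero_iff] at hwalks
  exact hwalks.false ⟨.cons hab (.cons hbc (.cons hcd .nil)), rfl⟩

lemma adj_iff_of_adjMatrix_pow_three_eq_smul {R : Type*} [Semiring R] [CharZero R] {s : R}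
    (hG : G.Connected) (c : G.Coloring Bool) (h : G.adjMatrix R ^ 3 = s • G.adjMatrix R)
    (u v : V) : G.Adj u v ↔ c u ≠ c v := by
  refine ⟨c.valid, fun huv => ?_⟩
  obtain ⟨p⟩ := hG u v
  refine p.adj_of_odd_length (fun _ _ _ _ => adj_of_adjMatrix_pow_three_eq_smul h) ?_
  rw [c.odd_length_iff_not_congr]
  cases hu : c u <;> cases hv : c v <;> simp_all

end SimpleGraph

namespace Real

variable {ι : Type*}

lemma sum_exp_eq_two_cosh_add [Fintype ι] [DecidableEq ι] {μ : ι → ℝ}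
    (hμ : ∑ k, μ k = 0) {i j : ι} (hij : i ≠ j) {r : ℝ} (hi : μ i = r) (hj : μ j = -r) :
    ∑ k, exp (μ k) = 2 * cosh r + (Fintype.card ι - 2 : ℝ) +
      ∑ k ∈ {i, j}ᶜ, (exp (μ k) - (μ k + 1)) := by
  have hcard : (({i, j}ᶜ : Finset ι).card : ℝ) = Fintype.card ι - 2 := by
    have h2 := Finset.card_le_univ {i, j}
    rw [Finset.card_pair hij] at h2
    rw [Finset.card_compl, Finset.card_pair hij, Nat.cast_sub h2, Nat.cast_two]
  have hrest : ∑ k ∈ {i, j}ᶜ, μ k = 0 := by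
    have := Finset.sum_add_sum_compl {i, j} μ
    rw [Finset.sum_pair hij, hi, hj, hμ] at this
    linarith
  rw [← Finset.sum_add_sum_compl {i, j}, Finset.sum_pair hij, Finset.sum_sub_distrib,
    Finset.sum_add_distrib, hrest, Finset.sum_const, nsmul_eq_mul, mul_one, hcard, hi, hj,
    cosh_eq]
  ring

lemma sum_exp_sub_add_one_nonneg (s : Finset ι) (μ : ι → ℝ) :
    0 ≤ ∑ k ∈ s, (exp (μ k) - (μ k + 1)) :=
  Finset.sum_nonneg fun _ _ => sub_nonneg.mpr (add_one_le_exp _)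

lemma sum_exp_sub_add_one_eq_zero_iff {s : Finset ι} {μ : ι → ℝ} :
    ∑ k ∈ s, (exp (μ k) - (μ k + 1)) = 0 ↔ ∀ k ∈ s, μ k = 0 := by
  rw [Finset.sum_eq_zero_iff_of_nonneg fun _ _ => sub_nonneg.mpr (add_one_le_exp _)]
  refine forall₂_congr fun k _ => ⟨fun h => ?_, fun h => by simp [h]⟩
  by_contra hk
  linarith [add_one_lt_exp hk]

end Real

section

open SimpleGraph

variable {n : ℕ} {G : SimpleGraph (Fin n)} [DecidableRel G.Adj]

lemma sum_graphEigs : ∑ i, graphEigs G i = 0 := by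
  have := (adjHerm G).trace_eq_sum_eigenvalues
  rw [trace_adjMatrix] at this
  simpa [graphEigs] using this.symm

lemma sum_graphEigs_sq : ∑ i, graphEigs G i ^ 2 = ((G.adjMatrix ℝ) ^ 2).trace := by
  rw [(adjHerm G).trace_pow_eq_sum_eigenvalues_pow]
  rfl

lemma exists_graphEigs_eq_neg (c : G.Coloring Bool) (i : Fin n) :
    ∃ j, graphEigs G j = -graphEigs G i := by
  have hneg := neg_mem_spectrum_adjMatrix c ((adjHerm G).eigenvalues_mem_spectrum_real i)
  rwa [(adjHerm G).spectrum_real_eq_range_eigenvalues] at hneg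

lemma exists_extreme_graphEigs (hn : 1 < n) (hG : G.Connected) (c : G.Coloring Bool) :
    ∃ i₀ i₁, i₀ ≠ i₁ ∧ 0 < graphEigs G i₀ ∧ graphEigs G i₁ = -graphEigs G i₀ ∧
      ∀ i, |graphEigs G i| ≤ graphEigs G i₀ := by
  have : Nontrivial (Fin n) := Fin.nontrivial_iff_two_le.mpr hn
  obtain ⟨i₀, hi₀⟩ := Finite.exists_max (graphEigs G)
  have habs : ∀ i, |graphEigs G i| ≤ graphEigs G i₀ := fun i => by
    obtain ⟨j, hj⟩ := exists_graphEigs_eq_neg c i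
    exact abs_le.mpr ⟨by linarith [hi₀ j], hi₀ i⟩
  have hpos : 0 < graphEigs G i₀ := by
    obtain ⟨w, hw⟩ := hG.preconnected.exists_adj_of_nontrivial i₀
    have hA : G.adjMatrix ℝ ≠ 0 := fun h => by simpa [hw] using congrFun (congrFun h i₀) w
    obtain ⟨i, hi⟩ := Function.ne_iff.mp (mt (adjHerm G).eigenvalues_eq_zero_iff.mp hA)
    exact (abs_pos.mpr hi).trans_le (habs i)
  obtain ⟨i₁, hi₁⟩ := exists_graphEigs_eq_neg c i₀
  refine ⟨i₀, i₁, fun h => ?_, hpos, hi₁, habs⟩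
  rw [← h] at hi₁
  linarith

lemma sum_dwalk_sq (k : ℕ) :
    ∑ i, dwalk G k i ^ 2 = (G.adjMatrix ℝ ^ k *ᵥ 1) ⬝ᵥ (G.adjMatrix ℝ ^ k *ᵥ 1) := by
  simp only [dotProduct, sq]
  rfl

lemma sum_dwalk_succ_sq (k : ℕ) :
    ∑ i, dwalk G (k + 1) i ^ 2 =
      (G.adjMatrix ℝ *ᵥ (G.adjMatrix ℝ ^ k *ᵥ 1)) ⬝ᵥ
        (G.adjMatrix ℝ *ᵥ (G.adjMatrix ℝ ^ k *ᵥ 1)) := by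
  rw [sum_dwalk_sq, pow_succ', ← mulVec_mulVec]

lemma gammaSeq_nonneg (k : ℕ) : 0 ≤ gammaSeq G k :=
  Real.sqrt_nonneg _

lemma gammaSeq_le {ρ : ℝ} (hρ0 : 0 ≤ ρ) (hρ : ∀ i, |graphEigs G i| ≤ ρ) (k : ℕ) :
    gammaSeq G k ≤ ρ := by
  rw [gammaSeq, Real.sqrt_le_left hρ0]
  refine div_le_of_le_mul₀ (Finset.sum_nonneg fun _ _ => sq_nonneg _) (sq_nonneg ρ) ?_
  rw [sum_dwalk_succ_sq, sum_dwalk_sq]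
  exact (adjHerm G).mulVec_dotProduct_mulVec_le hρ _

lemma sum_dwalk_sq_eq_pow_mul {s : ℝ} (h : G.adjMatrix ℝ ^ 2 *ᵥ 1 = s • 1) (k : ℕ) :
    ∑ i, dwalk G k i ^ 2 = s ^ k * n := by
  induction k with
  | zero => simp [dwalk]
  | succ k ih =>
    rw [sum_dwalk_succ_sq, G.isSymm_adjMatrix.mulVec_dotProduct, mulVec_mulVec, ← sq,
      mulVec_mulVec, ← pow_add, add_comm, pow_add, ← mulVec_mulVec, h, mulVec_smul,
      dotProduct_smul, ← sum_dwalk_sq, ih, smul_eq_mul, pow_succ]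
    ring

lemma gammaSeq_eq_sqrt {s : ℝ} (hs : 0 < s) (hn : 0 < n) (h : G.adjMatrix ℝ ^ 2 *ᵥ 1 = s • 1)
    (k : ℕ) : gammaSeq G k = √s := by
  have : (0 : ℝ) < n := Nat.cast_pos.mpr hn
  rw [gammaSeq, sum_dwalk_sq_eq_pow_mul h, sum_dwalk_sq_eq_pow_mul h, pow_succ, mul_right_comm,
    mul_div_cancel_left₀ _ (by positivity)]

lemma exists_iso_completeBipartiteGraph_of_graphEigs (hG : G.Connected) (c : G.Coloring Bool)
    {i₀ i₁ : Fin n} (hi₁ : graphEigs G i₁ = -graphEigs G i₀)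
    (hrest : ∀ i ∈ ({i₀, i₁}ᶜ : Finset (Fin n)), graphEigs G i = 0) :
    ∃ p q : ℕ, p + q = n ∧ Nonempty (G ≃g completeBipartiteGraph (Fin p) (Fin q)) := by
  have hcube : ∀ i, graphEigs G i ^ 3 = graphEigs G i₀ ^ 2 * graphEigs G i := by
    intro i
    by_cases hi : i ∈ ({i₀, i₁}ᶜ : Finset (Fin n))
    · rw [hrest i hi]
      ring
    · obtain rfl | rfl : i = i₀ ∨ i = i₁ := by simp at hi; tauto
      · ring
      · rw [hi₁]
        ring
  have hA := ((adjHerm G).pow_three_eq_smul_iff _).mpr hcube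
  simpa using
    exists_iso_completeBipartiteGraph_of_adj_iff (adj_iff_of_adjMatrix_pow_three_eq_smul hG c hA)

lemma gammaSeq_eq_and_graphEigs_eq_zero_of_iso (hn : 0 < n) {p q : ℕ}
    (e : G ≃g completeBipartiteGraph (Fin p) (Fin q)) {i₀ i₁ : Fin n} (hne : i₀ ≠ i₁)
    (hpos : 0 < graphEigs G i₀) (hi₁ : graphEigs G i₁ = -graphEigs G i₀) (k : ℕ) :
    gammaSeq G k = graphEigs G i₀ ∧ ∀ i ∈ ({i₀, i₁}ᶜ : Finset (Fin n)), graphEigs G i = 0 := by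
  obtain ⟨a, b, hab, hab1, hA⟩ :=
    exists_adjMatrix_eq_vecMulVec_add_vecMulVec (R := ℝ) e.adj_iff_isLeft_ne
  have hcube := ((adjHerm G).pow_three_eq_smul_iff ((a ⬝ᵥ a) * (b ⬝ᵥ b))).mp
    (by rw [hA]; exact vecMulVec_add_vecMulVec_pow_three hab)
  have hs : graphEigs G i₀ ^ 2 = (a ⬝ᵥ a) * (b ⬝ᵥ b) :=
    mul_right_cancel₀ hpos.ne' (by rw [← pow_succ]; exact hcube i₀)
  refine ⟨?_, fun i hi => ?_⟩
  · rw [gammaSeq_eq_sqrt (s := graphEigs G i₀ ^ 2) (by positivity) hn, Real.sqrt_sq hpos.le]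
    rw [hs, hA, ← hab1]
    exact vecMulVec_add_vecMulVec_sq_mulVec hab
  · have hsq := sum_graphEigs_sq (G := G)
    rw [hA, trace_vecMulVec_add_vecMulVec_sq hab, ← hs, ← Finset.sum_add_sum_compl {i₀, i₁},
      Finset.sum_pair hne, hi₁] at hsq
    have hrest : ∑ i ∈ ({i₀, i₁}ᶜ : Finset (Fin n)), graphEigs G i ^ 2 = 0 := by linarith
    exact pow_eq_zero_iff two_ne_zero |>.mp <|
      (Finset.sum_eq_zero_iff_of_nonneg fun _ _ => sq_nonneg _).mp hrest i hi

end

/-- For a bipartite connected simple graph on `n > 2` vertices,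
`EE(G) ≥ 2·cosh(γ^(k)) + n − 2` for every `k ≥ 0`, with equality iff `G` is
isomorphic to a complete bipartite graph `K_{p,q}` with `p + q = n`. -/
theorem estrada_ge_two_cosh_gammaSeq {n : ℕ} (hn : 2 < n)
    (G : SimpleGraph (Fin n)) [DecidableRel G.Adj] (hbip : G.Colorable 2)
    (hconn : G.Connected) :
    ∀ k : ℕ,
      estradaIndex G ≥ 2 * Real.cosh (gammaSeq G k) + ((n : ℝ) - 2) ∧
      (estradaIndex G = 2 * Real.cosh (gammaSeq G k) + ((n : ℝ) - 2) ↔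
        ∃ p q : ℕ, p + q = n ∧
          Nonempty (G ≃g completeBipartiteGraph (Fin p) (Fin q))) := by
  intro k
  obtain ⟨c⟩ : Nonempty (G.Coloring Bool) := ⟨G.recolorOfEquiv finTwoEquiv hbip.some⟩
  obtain ⟨i₀, i₁, hne, hpos, hi₁, habs⟩ := exists_extreme_graphEigs (by omega) hconn c
  have hEE : estradaIndex G = 2 * Real.cosh (graphEigs G i₀) + (n - 2) +
      ∑ i ∈ ({i₀, i₁}ᶜ : Finset (Fin n)), (Real.exp (graphEigs G i) - (graphEigs G i + 1)) := by
    have := Real.sum_exp_eq_two_cosh_add sum_graphEigs hne rfl hi₁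
    rwa [Fintype.card_fin] at this
  have hgap := Real.sum_exp_sub_add_one_nonneg {i₀, i₁}ᶜ (graphEigs G)
  have hcosh : Real.cosh (gammaSeq G k) ≤ Real.cosh (graphEigs G i₀) := by
    rw [Real.cosh_le_cosh, abs_of_nonneg (gammaSeq_nonneg k), abs_of_pos hpos]
    exact gammaSeq_le hpos.le habs k
  refine ⟨by linarith, fun heq => ?_, fun ⟨p, q, _, ⟨e⟩⟩ => ?_⟩
  · refine exists_iso_completeBipartiteGraph_of_graphEigs hconn c hi₁ ?_
    exact Real.sum_exp_sub_add_one_eq_zero_iff.mp (by linarith)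
  · obtain ⟨hγ, hrest⟩ := gammaSeq_eq_and_graphEigs_eq_zero_of_iso (by omega) e hne hpos hi₁ k
    rw [hEE, hγ, Real.sum_exp_sub_add_one_eq_zero_iff.mpr hrest]
    ring
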